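/- The Traveler's Dilemma is almost strictly competitive: the pure strategy profile (2,2) is the unique Nash equilibrium of the Traveler's Dilemma (in mixed strategies), with payoffs α = β = 2; (2,2) is a saddle point, i.e. α(x,e_2) ≤ α(e_2,e_2) ≤ α(e_2,y) and β(e_2,y) ≤ β(e_2,e_2) ≤ β(x,e_2) for all x ∈ X, y ∈ Y; and every twisted equilibrium of the Traveler's Dilemma also yields payoffs α = β = 2 to the two players. -/

import Mathlib

/-!
Against a mixed strategy supported on claims at most `c`, no claim `c' ≥ c` above 2 is a best
reply: if the support tops out at some `d < c'`, claiming `d` does strictly better, and if it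
tops out at `c'` itself, undercutting by one does. In a Nash equilibrium the largest claim in
either support is a best reply of its player against a strategy supported below it, so it is 2.

In the twisted game each player minimises the opponent's payoff, and claim 2 concedes strictly
less than any other claim whatever the opponent plays, so the twisted equilibrium is also (2,2).
-/

open Matrix

noncomputable section

/-- The set of mixed strategies: the standard simplex in `ℝ^m`. -/
def Simp (m : ℕ) : Set (Fin m → ℝ) := stdSimplex ℝ (Fin m)

/-- Bilinear payoff `xᵀ A y`. -/
def pay {m n : ℕ} (A : Matrix (Fin m) (Fin n) ℝ) (x : Fin m → ℝ) (y : Fin n → ℝ) : ℝ :=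
  x ⬝ᵥ A.mulVec y

/-- Payoff of a mixed strategy `x` against the pure strategy `j`: `α(x, e_j) = (xᵀA)_j`. -/
def purePay {m n : ℕ} (A : Matrix (Fin m) (Fin n) ℝ) (x : Fin m → ℝ) (j : Fin n) : ℝ :=
  Matrix.vecMul x A j

/-- Pure best replies of player II against `x`. -/
def BRII {m n : ℕ} (B : Matrix (Fin m) (Fin n) ℝ) (x : Fin m → ℝ) : Set (Fin n) :=
  {j | ∀ k, purePay B x k ≤ purePay B x j}

/-- Best-reply region `X(j)` of column `j`. -/
def XReg {m n : ℕ} (B : Matrix (Fin m) (Fin n) ℝ) (j : Fin n) : Set (Fin m → ℝ) :=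
  {x ∈ Simp m | j ∈ BRII B x}

/-- `D`: columns whose best-reply region has a fully mixed point. -/
def Dset {m n : ℕ} (B : Matrix (Fin m) (Fin n) ℝ) : Set (Fin n) :=
  {j | ∃ x ∈ XReg B j, ∀ i, 0 < x i}

/-- `E(j)`: columns of `B` payoff-equivalent to column `j`. -/
def Ecols {m n : ℕ} (B : Matrix (Fin m) (Fin n) ℝ) (j : Fin n) : Set (Fin n) :=
  {k | ∀ i, B i k = B i j}

/-- `min_j α(x, e_j)`. -/
def minPure {m n : ℕ} (A : Matrix (Fin m) (Fin n) ℝ) (x : Fin m → ℝ) : ℝ :=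
  sInf {w | ∃ j, w = purePay A x j}

/-- `max_j α(x, e_j)`. -/
def maxPure {m n : ℕ} (A : Matrix (Fin m) (Fin n) ℝ) (x : Fin m → ℝ) : ℝ :=
  sSup {w | ∃ j, w = purePay A x j}

/-- `max_{j ∈ BR_II(x)} α(x, e_j)`. -/
def maxBR {m n : ℕ} (A B : Matrix (Fin m) (Fin n) ℝ) (x : Fin m → ℝ) : ℝ :=
  sSup {w | ∃ j ∈ BRII B x, w = purePay A x j}

/-- Matrix game value `v_A = max_{x ∈ X} min_j α(x, e_j)`. -/
def matVal {m n : ℕ} (A : Matrix (Fin m) (Fin n) ℝ) : ℝ :=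
  sSup {v | ∃ x ∈ Simp m, v = minPure A x}

/-- `min_{k ∈ E(j)} α(x, e_k)`. -/
def minE {m n : ℕ} (A B : Matrix (Fin m) (Fin n) ℝ) (j : Fin n) (x : Fin m → ℝ) : ℝ :=
  sInf {w | ∃ k ∈ Ecols B j, w = purePay A x k}

/-- Commitment value `α^L = max_{j∈D} max_{x∈X(j)} min_{k∈E(j)} α(x,e_k)`. -/
def alphaL {m n : ℕ} (A B : Matrix (Fin m) (Fin n) ℝ) : ℝ :=
  sSup {v | ∃ j ∈ Dset B, ∃ x ∈ XReg B j, v = minE A B j x}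

/-- Highest leader payoff `α^H = max_{j : X(j)≠∅} max_{x∈X(j)} α(x,e_j)`. -/
def alphaH {m n : ℕ} (A B : Matrix (Fin m) (Fin n) ℝ) : ℝ :=
  sSup {v | ∃ j, ∃ x ∈ XReg B j, v = purePay A x j}

/-- Commitment optimal strategies of the leader (player I). -/
def XLset {m n : ℕ} (A B : Matrix (Fin m) (Fin n) ℝ) : Set (Fin m → ℝ) :=
  {x | ∃ j ∈ Dset B, x ∈ XReg B j ∧ minE A B j x = alphaL A B}

/-- Non-degeneracy for player I: no mixed strategy of player I has more pure best
replies (among player II's pure strategies) than the size of its support. -/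
def NondegFor {m n : ℕ} (B : Matrix (Fin m) (Fin n) ℝ) : Prop :=
  ∀ x ∈ Simp m, (BRII B x).ncard ≤ {i | x i ≠ 0}.ncard

/-- Nash equilibrium of the bimatrix game `(A,B)`. -/
def isNE {m n : ℕ} (A B : Matrix (Fin m) (Fin n) ℝ) (x : Fin m → ℝ) (y : Fin n → ℝ) : Prop :=
  x ∈ Simp m ∧ y ∈ Simp n ∧
  (∀ x' ∈ Simp m, pay A x' y ≤ pay A x y) ∧
  (∀ y' ∈ Simp n, pay B x y' ≤ pay B x y)

/-- Strategies of player I appearing in some Nash equilibrium. -/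
def NEX {m n : ℕ} (A B : Matrix (Fin m) (Fin n) ℝ) : Set (Fin m → ℝ) :=
  {x | ∃ y, isNE A B x y}

/-- Strategies of player II appearing in some Nash equilibrium. -/
def NEY {m n : ℕ} (A B : Matrix (Fin m) (Fin n) ℝ) : Set (Fin n → ℝ) :=
  {y | ∃ x, isNE A B x y}

/-- Weakly unilaterally competitive bimatrix game. -/
def WUC {m n : ℕ} (A B : Matrix (Fin m) (Fin n) ℝ) : Prop :=
  (∀ x₁ ∈ Simp m, ∀ x₂ ∈ Simp m, ∀ y ∈ Simp n,
    (pay A x₁ y > pay A x₂ y → pay B x₁ y ≤ pay B x₂ y) ∧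
    (pay A x₁ y = pay A x₂ y → pay B x₁ y = pay B x₂ y)) ∧
  (∀ y₁ ∈ Simp n, ∀ y₂ ∈ Simp n, ∀ x ∈ Simp m,
    (pay B x y₁ > pay B x y₂ → pay A x y₁ ≤ pay A x y₂) ∧
    (pay B x y₁ = pay B x y₂ → pay A x y₁ = pay A x y₂))

/-- Traveler's Dilemma payoff of the row player choosing `i` against `j`,
for `i, j ∈ {2,…,100}`. -/
def trdPay (i j : ℕ) : ℝ :=
  if i < j then (i : ℝ) + 2 else if i = j then (i : ℝ) else (j : ℝ) - 2

/-- Player I's payoff matrix in the Traveler's Dilemma; strategy `i : Fin 99`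
represents the claim `i + 2 ∈ {2,…,100}`. -/
def TrA : Matrix (Fin 99) (Fin 99) ℝ :=
  Matrix.of fun i j => trdPay (i.val + 2) (j.val + 2)

/-- Player II's payoff matrix in the Traveler's Dilemma. -/
def TrB : Matrix (Fin 99) (Fin 99) ℝ :=
  Matrix.of fun i j => trdPay (j.val + 2) (i.val + 2)

/-- The pure strategy `2` (index `0`) in the Traveler's Dilemma. -/
def trdTwo : Fin 99 → ℝ := Pi.single (⟨0, by norm_num⟩ : Fin 99) (1 : ℝ)

open Finset

section BimatrixGame

variable {m n : ℕ}

lemma pay_transpose (A : Matrix (Fin m) (Fin n) ℝ) (x : Fin n → ℝ) (y : Fin m → ℝ) :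
    pay Aᵀ x y = pay A y x := by
  rw [pay, pay, dotProduct_mulVec, vecMul_transpose, dotProduct_comm]

lemma pay_single_left (A : Matrix (Fin m) (Fin n) ℝ) (i : Fin m) (y : Fin n → ℝ) :
    pay A (Pi.single i 1) y = (A *ᵥ y) i := by
  rw [pay, single_dotProduct, one_mul]

lemma pay_single_single (A : Matrix (Fin m) (Fin n) ℝ) (i : Fin m) (j : Fin n) :
    pay A (Pi.single i 1) (Pi.single j 1) = A i j := by
  rw [pay_single_left, mulVec_single_one]
  rfl

lemma exists_ne_zero_of_mem_Simp {x : Fin n → ℝ} (hx : x ∈ Simp n) : ∃ i, x i ≠ 0 := by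
  by_contra! h
  simpa [h] using hx.2

lemma eq_single_of_mem_Simp {x : Fin n → ℝ} (hx : x ∈ Simp n) {k : Fin n}
    (hk : ∀ i, x i ≠ 0 → i = k) : x = Pi.single k 1 := by
  have hzero : ∀ i, i ≠ k → x i = 0 := fun i hi => by_contra fun h => hi (hk i h)
  have hxk : x k = 1 := by
    rw [← hx.2, sum_eq_single k (fun i _ hi => hzero i hi) (by simp)]
  funext i
  rcases eq_or_ne i k with rfl | hi
  · simp [hxk]
  · simp [hi, hzero i hi]

lemma mulVec_le_of_forall_le {A : Matrix (Fin m) (Fin n) ℝ} {y : Fin n → ℝ} (hy : y ∈ Simp n)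
    {i : Fin m} {c : ℝ} (h : ∀ j, A i j ≤ c) : (A *ᵥ y) i ≤ c :=
  calc (A *ᵥ y) i = ∑ j, A i j * y j := rfl
    _ ≤ ∑ j, c * y j := sum_le_sum fun j _ => mul_le_mul_of_nonneg_right (h j) (hy.1 j)
    _ = c := by rw [← mul_sum, hy.2, mul_one]

lemma le_mulVec_of_forall_le {A : Matrix (Fin m) (Fin n) ℝ} {y : Fin n → ℝ} (hy : y ∈ Simp n)
    {i : Fin m} {c : ℝ} (h : ∀ j, c ≤ A i j) : c ≤ (A *ᵥ y) i := by
  simpa [neg_mulVec] using mulVec_le_of_forall_le (A := -A) hy (i := i) (c := -c)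
    fun j => by simpa using h j

lemma mulVec_lt_mulVec_of_le_of_lt {A : Matrix (Fin m) (Fin n) ℝ} {y : Fin n → ℝ}
    (hy0 : ∀ j, 0 ≤ y j) {i k : Fin m} (hle : ∀ j, y j ≠ 0 → A i j ≤ A k j)
    {j₀ : Fin n} (hj₀ : y j₀ ≠ 0) (hlt : A i j₀ < A k j₀) : (A *ᵥ y) i < (A *ᵥ y) k := by
  change ∑ j, A i j * y j < ∑ j, A k j * y j
  refine sum_lt_sum (fun j _ => ?_)
    ⟨j₀, mem_univ _, mul_lt_mul_of_pos_right hlt ((hy0 j₀).lt_of_ne' hj₀)⟩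
  by_cases hj : y j = 0
  · simp [hj]
  · exact mul_le_mul_of_nonneg_right (hle j hj) (hy0 j)

lemma mulVec_lt_mulVec_of_forall_lt {A : Matrix (Fin m) (Fin n) ℝ} {y : Fin n → ℝ}
    (hy : y ∈ Simp n) {i k : Fin m} (hlt : ∀ j, A i j < A k j) : (A *ᵥ y) i < (A *ᵥ y) k :=
  have ⟨j₀, hj₀⟩ := exists_ne_zero_of_mem_Simp hy
  mulVec_lt_mulVec_of_le_of_lt hy.1 (fun j _ => (hlt j).le) hj₀ (hlt j₀)

lemma eq_dotProduct_of_ne_zero {x w : Fin n → ℝ} (hx : x ∈ Simp n)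
    (hw : ∀ k, w k ≤ x ⬝ᵥ w) {i : Fin n} (hi : x i ≠ 0) : w i = x ⬝ᵥ w := by
  have hsum : ∑ k, x k * (x ⬝ᵥ w - w k) = 0 := by
    simp only [mul_sub, sum_sub_distrib, ← sum_mul, hx.2, one_mul, dotProduct]
    ring
  have hterm := (sum_eq_zero_iff_of_nonneg fun k _ =>
    mul_nonneg (hx.1 k) (sub_nonneg.2 (hw k))).1 hsum i (mem_univ i)
  linarith [(mul_eq_zero.1 hterm).resolve_left hi]

lemma isNE.eq_zero_of_mulVec_lt {A B : Matrix (Fin m) (Fin n) ℝ} {x : Fin m → ℝ}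
    {y : Fin n → ℝ} (h : isNE A B x y) {i k : Fin m} (hik : (A *ᵥ y) i < (A *ᵥ y) k) :
    x i = 0 := by
  by_contra hi
  have hbest : ∀ k, (A *ᵥ y) k ≤ pay A x y := fun k => by
    simpa only [pay_single_left] using h.2.2.1 _ (single_mem_stdSimplex ℝ k)
  have heq : (A *ᵥ y) i = pay A x y := eq_dotProduct_of_ne_zero h.1 hbest hi
  linarith [hbest k]

lemma isNE.swap {A B : Matrix (Fin m) (Fin n) ℝ} {x : Fin m → ℝ} {y : Fin n → ℝ}
    (h : isNE A B x y) : isNE Bᵀ Aᵀ y x :=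
  ⟨h.2.1, h.1, fun y' hy' => by simpa only [pay_transpose] using h.2.2.2 y' hy',
    fun x' hx' => by simpa only [pay_transpose] using h.2.2.1 x' hx'⟩

lemma isNE.symm {A : Matrix (Fin n) (Fin n) ℝ} {x y : Fin n → ℝ} (h : isNE A Aᵀ x y) :
    isNE A Aᵀ y x := by
  simpa only [transpose_transpose] using h.swap

end BimatrixGame

section TravelersDilemma

lemma trdPay_le_of_le_of_lt {i j k : ℕ} (hjk : j ≤ k) (hki : k < i) :
    trdPay i j ≤ trdPay k j := by
  unfold trdPay
  split_ifs <;> first | omega | (rify at *; linarith)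

lemma trdPay_lt_self_of_lt {i k : ℕ} (hki : k < i) : trdPay i k < trdPay k k := by
  unfold trdPay
  split_ifs <;> first | omega | (rify at *; linarith)

lemma trdPay_succ_le {i j : ℕ} (hj : j ≤ i + 1) : trdPay (i + 1) j ≤ trdPay i j := by
  unfold trdPay
  split_ifs <;> first | omega | (rify at *; linarith)

lemma trdPay_succ_self_lt (i : ℕ) : trdPay (i + 1) (i + 1) < trdPay i (i + 1) := by
  unfold trdPay
  split_ifs <;> first | omega | (rify at *; linarith)

lemma trdPay_two_right_lt {i k : ℕ} (hi : 2 ≤ i) (hk : 2 < k) : trdPay i 2 < trdPay i k := by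
  unfold trdPay
  split_ifs <;> first | omega | (rify at *; linarith)

lemma trdPay_two_right_le {i : ℕ} (hi : 2 ≤ i) : trdPay i 2 ≤ 2 := by
  unfold trdPay
  split_ifs <;> first | omega | (rify at *; linarith)

lemma two_le_trdPay_two_left {j : ℕ} (hj : 2 ≤ j) : 2 ≤ trdPay 2 j := by
  unfold trdPay
  split_ifs <;> first | omega | (rify at *; linarith)

lemma trdTwo_eq : trdTwo = Pi.single 0 1 := rfl

lemma pay_TrB (x y : Fin 99 → ℝ) : pay TrB x y = pay TrA y x := pay_transpose TrA x y

lemma pay_TrA_trdTwo_trdTwo : pay TrA trdTwo trdTwo = 2 := by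
  rw [trdTwo_eq, pay_single_single]
  norm_num [TrA, trdPay]

lemma two_le_pay_TrA_trdTwo_left {y : Fin 99 → ℝ} (hy : y ∈ Simp 99) :
    2 ≤ pay TrA trdTwo y := by
  rw [trdTwo_eq, pay_single_left]
  exact le_mulVec_of_forall_le hy fun j => two_le_trdPay_two_left (by omega)

lemma pay_TrB_trdTwo_left_le_two {y : Fin 99 → ℝ} (hy : y ∈ Simp 99) :
    pay TrB trdTwo y ≤ 2 := by
  rw [trdTwo_eq, pay_single_left]
  exact mulVec_le_of_forall_le hy fun j =>
    show trdPay (j + 2) 2 ≤ 2 from trdPay_two_right_le (by omega)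

lemma exists_mulVec_TrA_lt {y : Fin 99 → ℝ} (hy : y ∈ Simp 99) {m : Fin 99} (hm : m ≠ 0)
    (hsupp : ∀ j, y j ≠ 0 → j ≤ m) : ∃ k, (TrA *ᵥ y) m < (TrA *ᵥ y) k := by
  obtain ⟨M, hM, hMmax⟩ := (univ.filter fun j => y j ≠ 0).exists_max_image id
    (let ⟨j, hj⟩ := exists_ne_zero_of_mem_Simp hy; ⟨j, by simpa using hj⟩)
  simp only [mem_filter, mem_univ, true_and, id] at hM hMmax
  have hle : ∀ j, y j ≠ 0 → (j : ℕ) ≤ M := fun j hj => hMmax j hj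
  rcases Fin.lt_or_eq_of_le (hsupp M hM) with hMm | rfl
  · refine ⟨M, mulVec_lt_mulVec_of_le_of_lt hy.1 (fun j hj => ?_) hM ?_⟩
    · exact trdPay_le_of_le_of_lt (by have := hle j hj; omega) (by omega)
    · exact trdPay_lt_self_of_lt (by omega)
  · have hM0 : (M : ℕ) ≠ 0 := fun h => hm (Fin.ext h)
    obtain ⟨k, hk⟩ : ∃ k : Fin 99, (M : ℕ) + 2 = k + 2 + 1 :=
      ⟨⟨M - 1, by omega⟩, show (M : ℕ) + 2 = M - 1 + 2 + 1 by omega⟩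
    refine ⟨k, mulVec_lt_mulVec_of_le_of_lt hy.1 (fun j hj => ?_) hM ?_⟩
    · change trdPay (M + 2) (j + 2) ≤ trdPay (k + 2) (j + 2)
      rw [hk]
      exact trdPay_succ_le (by have := hle j hj; omega)
    · change trdPay (M + 2) (M + 2) < trdPay (k + 2) (M + 2)
      rw [hk]
      exact trdPay_succ_self_lt _

lemma eq_zero_of_isNE_of_support_le {x y : Fin 99 → ℝ} (h : isNE TrA TrB x y) {m : Fin 99}
    (hm : x m ≠ 0) (hsupp : ∀ j, y j ≠ 0 → j ≤ m) : m = 0 := by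
  by_contra hm0
  obtain ⟨k, hk⟩ := exists_mulVec_TrA_lt h.2.1 hm0 hsupp
  exact hm (h.eq_zero_of_mulVec_lt hk)

lemma isNE_TrA_TrB_eq {x y : Fin 99 → ℝ} (h : isNE TrA TrB x y) :
    x = trdTwo ∧ y = trdTwo := by
  obtain ⟨m, hm, hmax⟩ := (univ.filter fun i => x i ≠ 0 ∨ y i ≠ 0).exists_max_image id
    (let ⟨i, hi⟩ := exists_ne_zero_of_mem_Simp h.1; ⟨i, by simp [hi]⟩)
  simp only [mem_filter, mem_univ, true_and, id] at hm hmax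
  have hm0 : m = 0 := by
    rcases hm with hx | hy
    · exact eq_zero_of_isNE_of_support_le h hx fun j hj => hmax j (.inr hj)
    · exact eq_zero_of_isNE_of_support_le h.symm hy fun j hj => hmax j (.inl hj)
  subst hm0
  exact ⟨eq_single_of_mem_Simp h.1 fun i hi => Fin.le_zero_iff.1 (hmax i (.inl hi)),
    eq_single_of_mem_Simp h.2.1 fun i hi => Fin.le_zero_iff.1 (hmax i (.inr hi))⟩

lemma twisted_isNE_fst_eq {x y : Fin 99 → ℝ} (h : isNE (-TrB) (-TrA) x y) : x = trdTwo := by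
  refine eq_single_of_mem_Simp h.1 fun i hi => by_contra fun hi0 => hi ?_
  have hi2 : (i : ℕ) ≠ 0 := fun h => hi0 (Fin.ext h)
  refine h.eq_zero_of_mulVec_lt (k := 0) (mulVec_lt_mulVec_of_forall_lt h.2.1 fun j => ?_)
  show -trdPay (j + 2) (i + 2) < -trdPay (j + 2) 2
  exact neg_lt_neg (trdPay_two_right_lt (by omega) (by omega))

end TravelersDilemma

/-- the Traveler's Dilemma is almost strictly competitive: `(2,2)` is
its unique (mixed) Nash equilibrium, with payoffs `α = β = 2`; `(2,2)` is a saddle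
point; and every twisted equilibrium (Nash equilibrium of the game with payoffs
`(−β, −α)`) also yields payoffs `α = β = 2`. -/
theorem stmt19 :
    isNE TrA TrB trdTwo trdTwo ∧
    (∀ x y : Fin 99 → ℝ, isNE TrA TrB x y → x = trdTwo ∧ y = trdTwo) ∧
    pay TrA trdTwo trdTwo = 2 ∧ pay TrB trdTwo trdTwo = 2 ∧
    (∀ x ∈ Simp 99,
      pay TrA x trdTwo ≤ pay TrA trdTwo trdTwo ∧
      pay TrB trdTwo trdTwo ≤ pay TrB x trdTwo) ∧
    (∀ y ∈ Simp 99,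
      pay TrA trdTwo trdTwo ≤ pay TrA trdTwo y ∧
      pay TrB trdTwo y ≤ pay TrB trdTwo trdTwo) ∧
    (∀ x y : Fin 99 → ℝ, isNE (-TrB) (-TrA) x y →
      pay TrA x y = 2 ∧ pay TrB x y = 2) := by
  have hA := pay_TrA_trdTwo_trdTwo
  have hB : pay TrB trdTwo trdTwo = 2 := by rw [pay_TrB, hA]
  have hcol (x) (hx : x ∈ Simp 99) : pay TrA x trdTwo ≤ 2 ∧ 2 ≤ pay TrB x trdTwo := by
    rw [← pay_TrB trdTwo x, pay_TrB x trdTwo]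
    exact ⟨pay_TrB_trdTwo_left_le_two hx, two_le_pay_TrA_trdTwo_left hx⟩
  have hrow (y) (hy : y ∈ Simp 99) : 2 ≤ pay TrA trdTwo y ∧ pay TrB trdTwo y ≤ 2 :=
    ⟨two_le_pay_TrA_trdTwo_left hy, pay_TrB_trdTwo_left_le_two hy⟩
  have htwo : trdTwo ∈ Simp 99 := single_mem_stdSimplex ℝ _
  refine ⟨⟨htwo, htwo, fun x hx => hA ▸ (hcol x hx).1, fun y hy => hB ▸ (hrow y hy).2⟩,
    fun x y => isNE_TrA_TrB_eq, hA, hB, fun x hx => hA ▸ hB ▸ hcol x hx,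
    fun y hy => hA ▸ hB ▸ hrow y hy, fun x y h => ?_⟩
  obtain rfl := twisted_isNE_fst_eq h
  obtain rfl := twisted_isNE_fst_eq (h.symm (A := -TrB))
  exact ⟨hA, hB⟩
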